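/- Define, for p ∈ ℝ³ and unit ω ∈ ℝ³, the vectors H_T^E(ω,p) with components H_T^E(ω,p)_i = −(ω_i + p̂_i)(1 − |p̂|²)/(1 + p̂·ω)² and H_T^B(ω,p) = (ω × p̂)(1 − |p̂|²)/(1 + p̂·ω)². Then for all p and all unit ω, |H_T^E(ω,p)| ≤ √2 / (p₀² (1 + p̂·ω)^{3/2}) and |H_T^B(ω,p)| ≤ √2 / (p₀² (1 + p̂·ω)^{3/2}), where |·| is the Euclidean norm. -/

import Mathlib

/-!
Since `1 - |p̂|² = 1/p₀²`, both kernels have the form `v / (p₀² t²)` with `t = 1 + p̂·ω > 0`, where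
`v = ω + p̂` or `v = ω × p̂`. In both cases `|v|² ≤ 2t`: indeed `|ω + p̂|² = 1 + 2 p̂·ω + |p̂|²` and
`|ω × p̂|² = |p̂|² - (p̂·ω)² ≤ (1 - p̂·ω)(1 + p̂·ω)`, using `|p̂| ≤ 1`. Hence
`|v| / (p₀² t²) ≤ √(2t) / (p₀² t²) = √2 / (p₀² t^{3/2})`.
-/

noncomputable section

open Real MeasureTheory
open scoped RealInnerProductSpace

abbrev E3 : Type := EuclideanSpace ℝ (Fin 3)

def p0 (p : E3) : ℝ := Real.sqrt (1 + ‖p‖ ^ 2)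

def phat (p : E3) : E3 := (p0 p)⁻¹ • p

def cross3 (a b : E3) : E3 :=
  (WithLp.equiv 2 (Fin 3 → ℝ)).symm
    ![a 1 * b 2 - a 2 * b 1, a 2 * b 0 - a 0 * b 2, a 0 * b 1 - a 1 * b 0]

def HTE (ω p : E3) : E3 :=
  (-((1 - ‖phat p‖ ^ 2) / (1 + ⟪phat p, ω⟫) ^ 2)) • (ω + phat p)

def HTB (ω p : E3) : E3 :=
  ((1 - ‖phat p‖ ^ 2) / (1 + ⟪phat p, ω⟫) ^ 2) • cross3 ω (phat p)

lemma norm_cross3_sq (a b : E3) :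
    ‖cross3 a b‖ ^ 2 = ‖a‖ ^ 2 * ‖b‖ ^ 2 - ⟪a, b⟫ ^ 2 := by
  simp only [← real_inner_self_eq_norm_sq, cross3, PiLp.inner_apply, RCLike.inner_apply,
    conj_trivial, Fin.sum_univ_three, WithLp.equiv_symm_apply, Matrix.cons_val_zero,
    Matrix.cons_val_one, Matrix.head_cons, Matrix.cons_val_two, Matrix.tail_cons]
  ring

section UnitVector

variable {F : Type*} [NormedAddCommGroup F] [InnerProductSpace ℝ F] {u ω : F}

lemma one_add_inner_pos_of_norm_lt_one (hu : ‖u‖ < 1) (hω : ‖ω‖ = 1) : 0 < 1 + ⟪u, ω⟫ := by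
  have h := neg_abs_le ⟪u, ω⟫
  have := abs_real_inner_le_norm u ω
  rw [hω, mul_one] at this
  linarith

lemma norm_add_sq_le_two_mul_one_add_inner (hu : ‖u‖ ≤ 1) (hω : ‖ω‖ = 1) :
    ‖ω + u‖ ^ 2 ≤ 2 * (1 + ⟪u, ω⟫) := by
  rw [norm_add_sq_real, hω, real_inner_comm]
  nlinarith [norm_nonneg u]

end UnitVector

lemma norm_cross3_sq_le_two_mul_one_add_inner {u ω : E3} (hu : ‖u‖ ≤ 1) (hω : ‖ω‖ = 1) :
    ‖cross3 ω u‖ ^ 2 ≤ 2 * (1 + ⟪u, ω⟫) := by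
  have hc := abs_real_inner_le_norm u ω
  rw [hω, mul_one] at hc
  have hc' := abs_le.mp (hc.trans hu)
  rw [norm_cross3_sq, hω, real_inner_comm]
  -- `|u|² - c² ≤ 1 - c² = (1 - c)(1 + c) ≤ 2(1 + c)` for `c = ⟪u, ω⟫ ∈ [-1, 1]`
  nlinarith [norm_nonneg u]

lemma p0_pos (p : E3) : 0 < p0 p := Real.sqrt_pos.mpr (by positivity)

lemma p0_sq (p : E3) : p0 p ^ 2 = 1 + ‖p‖ ^ 2 := Real.sq_sqrt (by positivity)

lemma norm_phat_sq (p : E3) : ‖phat p‖ ^ 2 = ‖p‖ ^ 2 / p0 p ^ 2 := by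
  rw [phat, norm_smul, norm_inv, Real.norm_of_nonneg (p0_pos p).le, inv_mul_eq_div, div_pow]

lemma one_sub_norm_phat_sq (p : E3) : 1 - ‖phat p‖ ^ 2 = (p0 p ^ 2)⁻¹ := by
  have h := p0_pos p
  rw [norm_phat_sq, p0_sq]
  field_simp
  ring

lemma norm_phat_lt_one (p : E3) : ‖phat p‖ < 1 := by
  have h := one_sub_norm_phat_sq p
  have : 0 < (p0 p ^ 2)⁻¹ := by have := p0_pos p; positivity
  nlinarith [norm_nonneg (phat p)]

lemma norm_kernel_smul (p ω v : E3) :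
    ‖((1 - ‖phat p‖ ^ 2) / (1 + ⟪phat p, ω⟫) ^ 2) • v‖
      = ‖v‖ / (p0 p ^ 2 * (1 + ⟪phat p, ω⟫) ^ 2) := by
  rw [norm_smul, one_sub_norm_phat_sq, Real.norm_of_nonneg (by positivity)]
  field_simp

lemma div_mul_sq_le_of_sq_le_two_mul {x P t : ℝ} (hx : 0 ≤ x) (hP : 0 < P) (ht : 0 < t)
    (hxt : x ^ 2 ≤ 2 * t) : x / (P * t ^ 2) ≤ √2 / (P * t ^ ((3 : ℝ) / 2)) := by
  have hx_le : x ≤ √2 * √t := by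
    rw [← Real.sqrt_mul zero_le_two, ← Real.sqrt_sq hx]
    exact Real.sqrt_le_sqrt hxt
  have ht32 : t ^ ((3 : ℝ) / 2) = t * √t := by
    rw [show (3 : ℝ) / 2 = 1 + 1 / 2 by norm_num, Real.rpow_add ht, Real.rpow_one,
      ← Real.sqrt_eq_rpow]
  have hsqrt : 0 < √t := Real.sqrt_pos.mpr ht
  calc x / (P * t ^ 2) ≤ √2 * √t / (P * t ^ 2) := by gcongr
    _ = √2 / (P * t ^ ((3 : ℝ) / 2)) := by
      rw [ht32, div_eq_div_iff (by positivity) (by positivity)]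
      linear_combination √2 * P * t * Real.mul_self_sqrt ht.le

/-- For all `p` and all unit `ω`, `|H_T^E(ω,p)| ≤ √2 / (p₀² (1 + p̂·ω)^{3/2})` and
`|H_T^B(ω,p)| ≤ √2 / (p₀² (1 + p̂·ω)^{3/2})`. -/
theorem stmt2 (p ω : E3) (hω : ‖ω‖ = 1) :
    ‖HTE ω p‖ ≤ Real.sqrt 2 / ((p0 p) ^ 2 * (1 + ⟪phat p, ω⟫) ^ ((3 : ℝ) / 2)) ∧
    ‖HTB ω p‖ ≤ Real.sqrt 2 / ((p0 p) ^ 2 * (1 + ⟪phat p, ω⟫) ^ ((3 : ℝ) / 2)) := by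
  have hu := norm_phat_lt_one p
  have ht := one_add_inner_pos_of_norm_lt_one hu hω
  have hP : 0 < p0 p ^ 2 := pow_pos (p0_pos p) 2
  constructor
  · rw [HTE, neg_smul, norm_neg, norm_kernel_smul]
    exact div_mul_sq_le_of_sq_le_two_mul (norm_nonneg _) hP ht
      (norm_add_sq_le_two_mul_one_add_inner hu.le hω)
  · rw [HTB, norm_kernel_smul]
    exact div_mul_sq_le_of_sq_le_two_mul (norm_nonneg _) hP ht
      (norm_cross3_sq_le_two_mul_one_add_inner hu.le hω)
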